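/- Let M be a 12-vertex 6-dimensional weak pseudomanifold with complementarity, and assume the link of every 4-element face of M is a combinatorial 2-sphere. Then the link of every 3-element face of M is a 9-vertex combinatorial 3-manifold, and it is connected. -/

import Mathlib

open Finset

/-- `K` is an (abstract) simplicial complex: faces are nonempty finite sets,
closed under passing to nonempty subsets. -/
def IsComplex {V : Type} [DecidableEq V] (K : Finset (Finset V)) : Prop :=
  (∀ σ ∈ K, σ.Nonempty) ∧ ∀ σ ∈ K, ∀ τ ⊆ σ, τ.Nonempty → τ ∈ K

/-- `K` is pure of dimension `d`: every face has at most `d+1` vertices and is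
contained in a face with exactly `d+1` vertices (a facet). -/
def IsPure {V : Type} [DecidableEq V] (d : ℕ) (K : Finset (Finset V)) : Prop :=
  (∀ σ ∈ K, σ.card ≤ d + 1) ∧ ∀ σ ∈ K, ∃ γ ∈ K, σ ⊆ γ ∧ γ.card = d + 1

/-- `K` is a `d`-dimensional weak pseudomanifold: a pure `d`-dimensional simplicial
complex (with at least one facet) in which every `(d-1)`-face (i.e. `d`-element face)
is contained in exactly two facets. -/
def IsWPM {V : Type} [DecidableEq V] (d : ℕ) (K : Finset (Finset V)) : Prop :=
  IsComplex K ∧ IsPure d K ∧ (∃ σ ∈ K, σ.card = d + 1) ∧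
    ∀ σ ∈ K, σ.card = d → (K.filter fun γ => γ.card = d + 1 ∧ σ ⊆ γ).card = 2

/-- Complementarity: exactly one of each complementary pair of nonempty subsets
of the vertex set is a face. -/
def Complementarity {V : Type} [DecidableEq V] [Fintype V] (K : Finset (Finset V)) : Prop :=
  ∀ A : Finset V, A.Nonempty → Aᶜ.Nonempty → (A ∈ K ↔ Aᶜ ∉ K)

/-- The link of `σ` in `K`: all faces `τ` disjoint from `σ` with `σ ∪ τ` a face. -/
def lk {V : Type} [DecidableEq V] (K : Finset (Finset V)) (σ : Finset V) :
    Finset (Finset V) :=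
  K.filter fun τ => σ ∩ τ = ∅ ∧ σ ∪ τ ∈ K

/-- The vertex set of a simplicial complex. -/
def vertSet {V : Type} [DecidableEq V] [Fintype V] (K : Finset (Finset V)) : Finset V :=
  Finset.univ.filter fun v => ({v} : Finset V) ∈ K

/-- Euler characteristic of a simplicial complex. -/
def eulerChar {V : Type} [DecidableEq V] (K : Finset (Finset V)) : ℤ :=
  ∑ σ ∈ K, (-1 : ℤ) ^ (σ.card - 1)

/-- A simplicial complex is connected if any two of its vertices are joined by a
path of edges. -/
def ComplexConnected {V : Type} [DecidableEq V] [Fintype V] (L : Finset (Finset V)) : Prop :=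
  ∀ u ∈ vertSet L, ∀ v ∈ vertSet L,
    Relation.ReflTransGen (fun a b : V => ({a, b} : Finset V) ∈ L) u v

/-- `L` is a circle (cycle complex): a connected 1-dimensional simplicial complex in
which every vertex lies in exactly two edges. -/
def IsCycle {V : Type} [DecidableEq V] [Fintype V] (L : Finset (Finset V)) : Prop :=
  IsComplex L ∧ (∀ σ ∈ L, σ.card ≤ 2) ∧ (∃ σ ∈ L, σ.card = 2) ∧
    (∀ v ∈ vertSet L, (L.filter fun e => e.card = 2 ∧ v ∈ e).card = 2) ∧
    ComplexConnected L

/-- `L` is a closed combinatorial 2-manifold: a 2-dimensional simplicial complex in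
which the link of every vertex is a circle. -/
def IsClosed2Mfd {V : Type} [DecidableEq V] [Fintype V] (L : Finset (Finset V)) : Prop :=
  IsComplex L ∧ (∀ σ ∈ L, σ.card ≤ 3) ∧ (∃ σ ∈ L, σ.card = 3) ∧
    ∀ v ∈ vertSet L, IsCycle (lk L {v})

/-- `L` is a combinatorial 2-sphere: a connected closed combinatorial 2-manifold of
Euler characteristic 2. -/
def Is2Sphere {V : Type} [DecidableEq V] [Fintype V] (L : Finset (Finset V)) : Prop :=
  IsClosed2Mfd L ∧ ComplexConnected L ∧ eulerChar L = 2

/-- The degree of a face: the number of vertices of its link. -/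
def degFace {V : Type} [DecidableEq V] [Fintype V] (K : Finset (Finset V))
    (σ : Finset V) : ℕ :=
  (vertSet (lk K σ)).card

/-! Complementarity together with the dimension bound makes `M` 4-neighbourly: the complement
of a set of at most 4 vertices has at least 8 vertices, too many for a face. Hence the link of a
triangle `δ` contains all 9 other vertices, and its vertex links are the links `lk M (δ ∪ {v})`
of 4-element faces, i.e. 2-spheres. A 2-sphere has at least 4 vertices, so every vertex of
`lk M δ` has a closed neighbourhood of at least 5 vertices; two such neighbourhoods among 9
vertices must meet, which connects any two vertices. -/

section Complex

variable {V : Type} [DecidableEq V]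

lemma lk_subset (K : Finset (Finset V)) (σ : Finset V) : lk K σ ⊆ K := filter_subset _ _

lemma IsComplex.isComplex_lk {K : Finset (Finset V)} (hK : IsComplex K) (σ : Finset V) :
    IsComplex (lk K σ) := by
  refine ⟨fun τ hτ => hK.1 τ (lk_subset K σ hτ), fun τ hτ τ' hτ' hne => ?_⟩
  simp only [lk, mem_filter] at hτ ⊢
  obtain ⟨hτK, hdisj, hunion⟩ := hτ
  refine ⟨hK.2 τ hτK τ' hτ' hne, ?_, ?_⟩
  · exact subset_empty.mp (hdisj ▸ inter_subset_inter_left hτ')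
  · exact hK.2 _ hunion _ (union_subset_union_right hτ') (hne.mono subset_union_right)

lemma IsComplex.lk_lk_singleton {K : Finset (Finset V)} (hK : IsComplex K) {σ : Finset V}
    {v : V} (hv : v ∉ σ) : lk (lk K σ) {v} = lk K (σ ∪ {v}) := by
  ext τ
  simp only [lk, mem_filter, union_inter_distrib_right, union_eq_empty, union_assoc]
  constructor
  · rintro ⟨⟨hτK, hστ, -⟩, hvτ, -, -, hK'⟩
    exact ⟨hτK, ⟨hστ, hvτ⟩, hK'⟩
  · rintro ⟨hτK, ⟨hστ, hvτ⟩, hK'⟩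
    have hτ : τ.Nonempty := hK.1 τ hτK
    refine ⟨⟨hτK, hστ, hK.2 _ hK' _ ?_ (hτ.mono subset_union_right)⟩, hvτ,
      hK.2 _ hK' _ subset_union_right (hτ.mono subset_union_right), ?_, hK'⟩
    · exact union_subset_union_right subset_union_right
    · rw [inter_union_distrib_left, hστ, union_empty, inter_singleton_of_notMem hv]

variable [Fintype V]

lemma mem_vertSet {K : Finset (Finset V)} {v : V} : v ∈ vertSet K ↔ {v} ∈ K := by
  simp [vertSet]

lemma mem_vertSet_lk {K : Finset (Finset V)} {σ : Finset V} {v : V} :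
    v ∈ vertSet (lk K σ) ↔ {v} ∈ K ∧ v ∉ σ ∧ σ ∪ {v} ∈ K := by
  simp only [mem_vertSet, lk, mem_filter, ← disjoint_iff_inter_eq_empty, disjoint_singleton_right]

lemma mem_vertSet_lk_singleton {L : Finset (Finset V)} {w x : V} :
    x ∈ vertSet (lk L {w}) ↔ {x} ∈ L ∧ x ≠ w ∧ {w, x} ∈ L := by
  rw [mem_vertSet_lk, mem_singleton, ← insert_eq]

lemma notMem_vertSet_lk_singleton (L : Finset (Finset V)) (w : V) :
    w ∉ vertSet (lk L {w}) := fun h => (mem_vertSet_lk_singleton.mp h).2.1 rfl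

lemma insert_vertSet_lk_singleton_subset {L : Finset (Finset V)} {w : V}
    (hw : w ∈ vertSet L) : insert w (vertSet (lk L {w})) ⊆ vertSet L :=
  insert_subset hw fun _ hx => mem_vertSet.mpr (mem_vertSet_lk_singleton.mp hx).1

lemma card_vertSet_lk_singleton_lt {L : Finset (Finset V)} {w : V} (hw : w ∈ vertSet L) :
    (vertSet (lk L {w})).card < (vertSet L).card := by
  have := card_le_card (insert_vertSet_lk_singleton_subset hw)
  rwa [card_insert_of_notMem (notMem_vertSet_lk_singleton L w)] at this

lemma IsComplex.card_edges_le_card_vertSet_lk {L : Finset (Finset V)} (hL : IsComplex L)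
    (v : V) :
    (L.filter fun e => e.card = 2 ∧ v ∈ e).card ≤ (vertSet (lk L {v})).card := by
  refine card_le_card_of_surjOn (fun x => {v, x}) fun e he => ?_
  obtain ⟨heL, he2, hve⟩ := mem_filter.mp (mem_coe.mp he)
  obtain ⟨x, hxv, rfl⟩ : ∃ x, x ≠ v ∧ {v, x} = e := by
    obtain ⟨a, b, hab, rfl⟩ := card_eq_two.mp he2
    rcases mem_insert.mp hve with rfl | hvb
    · exact ⟨b, hab.symm, rfl⟩
    · rw [mem_singleton.mp hvb]
      exact ⟨a, hab, pair_comm _ _⟩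
  have hxL : {x} ∈ L := hL.2 _ heL {x} (by simp) (singleton_nonempty x)
  exact ⟨x, mem_coe.mpr (mem_vertSet_lk_singleton.mpr ⟨hxL, hxv, heL⟩), rfl⟩

lemma IsCycle.three_le_card_vertSet {L : Finset (Finset V)} (hL : IsCycle L) :
    3 ≤ (vertSet L).card := by
  obtain ⟨hLc, -, ⟨e, heL, -⟩, hdeg, -⟩ := hL
  obtain ⟨v, hv⟩ := hLc.1 e heL
  have hvL : v ∈ vertSet L :=
    mem_vertSet.mpr (hLc.2 e heL {v} (by simpa) (singleton_nonempty v))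
  have := hdeg v hvL
  have := hLc.card_edges_le_card_vertSet_lk v
  have := card_vertSet_lk_singleton_lt hvL
  omega

lemma IsClosed2Mfd.four_le_card_vertSet {S : Finset (Finset V)} (hS : IsClosed2Mfd S) :
    4 ≤ (vertSet S).card := by
  obtain ⟨hSc, -, ⟨σ, hσS, -⟩, hlinks⟩ := hS
  obtain ⟨v, hv⟩ := hSc.1 σ hσS
  have hvS : v ∈ vertSet S :=
    mem_vertSet.mpr (hSc.2 σ hσS {v} (by simpa) (singleton_nonempty v))
  have := (hlinks v hvS).three_le_card_vertSet
  have := card_vertSet_lk_singleton_lt hvS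
  omega

lemma complexConnected_of_card_vertSet_lt {L : Finset (Finset V)} {m : ℕ}
    (hdeg : ∀ w ∈ vertSet L, m ≤ (vertSet (lk L {w})).card)
    (hcard : (vertSet L).card < 2 * (m + 1)) : ComplexConnected L := by
  let adj : V → V → Prop := fun a b => ({a, b} : Finset V) ∈ L
  have : Std.Symm adj := ⟨fun a b hab => by simpa only [adj, pair_comm] using hab⟩
  have hnbhd : ∀ w ∈ vertSet L, ∀ x ∈ insert w (vertSet (lk L {w})),
      Relation.ReflTransGen adj w x := by
    intro w _ x hx
    rcases mem_insert.mp hx with rfl | hx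
    · exact .refl
    · exact .single (mem_vertSet_lk_singleton.mp hx).2.2
  have hclosed : ∀ w ∈ vertSet L, m + 1 ≤ (insert w (vertSet (lk L {w}))).card := by
    intro w hw
    rw [card_insert_of_notMem (notMem_vertSet_lk_singleton L w)]
    exact Nat.succ_le_succ (hdeg w hw)
  intro u hu v hv
  obtain ⟨x, hx⟩ := inter_nonempty_of_card_lt_card_add_card
    (insert_vertSet_lk_singleton_subset hu) (insert_vertSet_lk_singleton_subset hv)
    (by linarith [hclosed u hu, hclosed v hv])
  rw [mem_inter] at hx
  exact (hnbhd u hu x hx.1).trans (Std.Symm.symm _ _ (hnbhd v hv x hx.2))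

lemma Complementarity.mem_of_card_add_lt {K : Finset (Finset V)} (hK : Complementarity K)
    {d : ℕ} (hdim : ∀ σ ∈ K, σ.card ≤ d + 1) {A : Finset V} (hA : A.Nonempty)
    (hcard : A.card + (d + 1) < Fintype.card V) : A ∈ K := by
  have hAc : d + 1 < Aᶜ.card := by rw [card_compl]; omega
  refine (hK A hA (card_pos.mp (by omega))).mpr fun hAcK => ?_
  exact absurd (hdim _ hAcK) (not_le.mpr hAc)

lemma IsComplex.vertSet_lk_eq_compl {K : Finset (Finset V)} (hK : IsComplex K) {σ : Finset V}
    (hσ : ∀ v ∉ σ, σ ∪ {v} ∈ K) : vertSet (lk K σ) = σᶜ := by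
  ext v
  rw [mem_vertSet_lk, mem_compl]
  refine ⟨fun h => h.2.1, fun hv => ⟨?_, hv, hσ v hv⟩⟩
  exact hK.2 _ (hσ v hv) {v} subset_union_right (singleton_nonempty v)

end Complex

theorem stmt_12_general (M : Finset (Finset (Fin 12))) (hM : IsWPM 6 M)
    (hcomp : Complementarity M)
    (hlink : ∀ γ ∈ M, γ.card = 4 → Is2Sphere (lk M γ)) :
    ∀ δ ∈ M, δ.card = 3 →
      (vertSet (lk M δ)).card = 9 ∧
      (∀ v ∈ vertSet (lk M δ), Is2Sphere (lk (lk M δ) {v})) ∧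
      ComplexConnected (lk M δ) := by
  obtain ⟨hMc, ⟨hdim, -⟩, -, -⟩ := hM
  intro δ _ hδ
  have hcard_insert : ∀ v ∉ δ, (δ ∪ {v}).card = 4 := fun v hv => by
    rw [card_union_of_disjoint (disjoint_singleton_right.mpr hv), hδ, card_singleton]
  have hfour : ∀ v ∉ δ, δ ∪ {v} ∈ M := fun v hv =>
    hcomp.mem_of_card_add_lt hdim ⟨v, by simp⟩
      (by rw [hcard_insert v hv, Fintype.card_fin]; norm_num)
  have hvert : vertSet (lk M δ) = δᶜ := hMc.vertSet_lk_eq_compl hfour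
  have hspheres : ∀ v ∈ vertSet (lk M δ), Is2Sphere (lk (lk M δ) {v}) := by
    intro v hv
    rw [hvert, mem_compl] at hv
    rw [hMc.lk_lk_singleton hv]
    exact hlink _ (hfour v hv) (hcard_insert v hv)
  have hnine : (vertSet (lk M δ)).card = 9 := by
    rw [hvert, card_compl, Fintype.card_fin, hδ]
  refine ⟨hnine, hspheres, complexConnected_of_card_vertSet_lt (m := 4) ?_ (by omega)⟩
  exact fun w hw => (hspheres w hw).1.four_le_card_vertSet

/-- Lemma 4.6: in a 12-vertex 6-dimensional weak pseudomanifold with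
complementarity in which the link of every 4-element face is a combinatorial
2-sphere, the link of every 3-element face is a connected 9-vertex combinatorial
3-manifold (all of its vertex links are combinatorial 2-spheres). -/
theorem stmt_12 (M : Finset (Finset (Fin 12))) (hM : IsWPM 6 M)
    (hvert : ∀ v : Fin 12, ({v} : Finset (Fin 12)) ∈ M)
    (hcomp : Complementarity M)
    (hlink : ∀ γ ∈ M, γ.card = 4 → Is2Sphere (lk M γ)) :
    ∀ δ ∈ M, δ.card = 3 →
      (vertSet (lk M δ)).card = 9 ∧
      (∀ v ∈ vertSet (lk M δ), Is2Sphere (lk (lk M δ) {v})) ∧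
      ComplexConnected (lk M δ) :=
  stmt_12_general M hM hcomp hlink
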